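/- Let ω be a regular modulus of continuity. There is a constant C = C(ω) > 0 such that for every g ∈ BMO_ω(ℂ) ∩ L^∞(ℂ) and every square Q ⊂ ℂ with center z₀ and side length ℓ = ℓ(Q) ≤ 1/4, the integral ∫_{ℂ∖2Q} |g(u) − g_Q| / |u − z₀|³ dA(u) converges and ℓ·∫_{ℂ∖2Q} |g(u) − g_Q| / |u − z₀|³ dA(u) ≤ C·(‖g‖_{BMO_ω} + ‖g‖_{L^∞(ℂ)})·ω(ℓ). -/

import Mathlib

open MeasureTheory Set Filter
open scoped Classical

noncomputable section

/-- The axis-parallel closed square with center `c` and side length `l`. -/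
def Sq (c : ℂ) (l : ℝ) : Set ℂ :=
  {z : ℂ | |z.re - c.re| ≤ l / 2 ∧ |z.im - c.im| ≤ l / 2}

/-- Mean value of `f` over a set `S` with respect to planar Lebesgue measure. -/
def avgOn (f : ℂ → ℂ) (S : Set ℂ) : ℂ :=
  ((volume S).toReal)⁻¹ • ∫ z in S, f z

/-- `ω` is a modulus of continuity: increasing, continuous on `[0,∞)`,
vanishing at `0` and positive for positive arguments. -/
def IsModulus (ω : ℝ → ℝ) : Prop :=
  ContinuousOn ω (Ici 0) ∧ MonotoneOn ω (Ici 0) ∧ ω 0 = 0 ∧ ∀ t : ℝ, 0 < t → 0 < ω t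

/-- `ω` is Dini-smooth: `∫₀¹ ω(t)/t dt < ∞`. -/
def IsDini (ω : ℝ → ℝ) : Prop :=
  IntegrableOn (fun t => ω t / t) (Ioc (0:ℝ) 1)

/-- `ω` is regular: Dini-smooth and `ω(t)/t^ε` is almost decreasing
for some `ε ∈ (0,1)`. -/
def IsRegularModulus (ω : ℝ → ℝ) : Prop :=
  IsDini ω ∧ ∃ ε ∈ Ioo (0:ℝ) 1, ∃ C₀ : ℝ, 0 < C₀ ∧
    ∀ t s : ℝ, 0 < s → s < t → ω t / t ^ ε ≤ C₀ * (ω s / s ^ ε)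

/-- `N` is a `BMO_ω(ℂ)` bound for `g`: for every square `Q`,
`∫_Q |g - g_Q| ≤ N · ω(ℓ(Q)) · |Q|`. -/
def BMOBound (ω : ℝ → ℝ) (g : ℂ → ℂ) (N : ℝ) : Prop :=
  ∀ (c : ℂ) (l : ℝ), 0 < l →
    ∫ z in Sq c l, ‖g z - avgOn g (Sq c l)‖ ≤ N * (ω l * l ^ 2)

/-- `N` is a `BMO_ω(Ω)` bound for `f`: for every square `Q` meeting `Ω`,
`∫_{Q∩Ω} |f - f_{Q|Ω}| ≤ N · ω(ℓ(Q)) · |Q|`. -/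
def BMOBoundOn (ω : ℝ → ℝ) (Ω : Set ℂ) (f : ℂ → ℂ) (N : ℝ) : Prop :=
  ∀ (c : ℂ) (l : ℝ), 0 < l → (Sq c l ∩ Ω).Nonempty →
    ∫ z in Sq c l ∩ Ω, ‖f z - avgOn f (Sq c l ∩ Ω)‖ ≤ N * (ω l * l ^ 2)

/-- `Ω` is a bounded domain in `ℂ`. -/
def IsBoundedDomain (Ω : Set ℂ) : Prop :=
  IsOpen Ω ∧ IsConnected Ω ∧ Bornology.IsBounded Ω

/-- `Ω ⊂ ℂ` has `C^{1,ω}`-smooth boundary: near each boundary point, after a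
rotation by an integer multiple of `π/2`, `Ω` is the subgraph of a `C^{1,ω}`
function `φ` with `φ 0 = 0`. -/
def HasC1OmegaBoundary (ω : ℝ → ℝ) (Ω : Set ℂ) : Prop :=
  ∀ ζ ∈ frontier Ω, ∃ (r C : ℝ) (k : ℤ) (φ : ℝ → ℝ),
    0 < r ∧ 0 < C ∧ φ 0 = 0 ∧ Differentiable ℝ φ ∧
    (∀ s t : ℝ, |deriv φ s - deriv φ t| ≤ C * ω |s - t|) ∧
    ((fun z : ℂ => Complex.I ^ k * (z - ζ)) '' Ω) ∩
        {z : ℂ | z.re ∈ Ioo (-r) r ∧ z.im ∈ Ioo (-r) r} =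
      {z : ℂ | z.re ∈ Ioo (-r) r ∧ z.im ∈ Ioo (-r) (min (φ z.re) r)}

/-- `v` is the value at `z` of the restricted Beurling transform of `f` on `Ω`,
defined by the principal value
`B_Ω f(z) = -(1/π) lim_{ε→0⁺} ∫_{w ∈ Ω, |w-z| > ε} f(w)/(z-w)² dA(w)`. -/
def HasPVBeurling (Ω : Set ℂ) (f : ℂ → ℂ) (z v : ℂ) : Prop :=
  Tendsto (fun ε : ℝ =>
      -(Real.pi : ℂ)⁻¹ * ∫ w in {w ∈ Ω | ε < ‖w - z‖}, f w / (z - w) ^ 2)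
    (nhdsWithin 0 (Ioi 0)) (nhds v)


/-!
Pass to the dyadic squares `2ᵏQ`. Comparing the averages of `g` over `2ᵏQ` and `2ᵏ⁺¹Q` through
the `BMO_ω` bound of the larger one gives `|g_{2ᵏQ} - g_{2ᵏ⁺¹Q}| ≲ N ω(2ᵏ⁺¹ℓ)`, and regularity of
`ω` gives `ω(2ᵏℓ) ≲ 2^{kε} ω(ℓ)`; telescoping, `∫_{2ᵏQ} |g - g_Q| ≲ (2ᵏℓ)² 2^{kε} N ω(ℓ)`.
On the annulus `2ᵏ⁺¹(2Q) \ 2ᵏ(2Q)` the kernel is at most `(2ᵏℓ)⁻³`, so the annuli contribute a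
geometric series of ratio `2^{ε-1} < 1`, whose sum is `≲ N ω(ℓ) / ℓ`.
-/

lemma Sq_eq_preimage (c : ℂ) (l : ℝ) :
    Sq c l = Complex.measurableEquivRealProd ⁻¹'
      (Icc (c.re - l / 2) (c.re + l / 2) ×ˢ Icc (c.im - l / 2) (c.im + l / 2)) := by
  ext z
  simp only [Sq, mem_ofPred_eq, abs_sub_le_iff, mem_preimage,
    Complex.measurableEquivRealProd_apply, mem_prod, mem_Icc]
  constructor <;> rintro ⟨⟨_, _⟩, _, _⟩ <;> refine ⟨⟨?_, ?_⟩, ?_, ?_⟩ <;> linarith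

lemma Sq_mono (c : ℂ) {s t : ℝ} (h : s ≤ t) : Sq c s ⊆ Sq c t :=
  fun _ ⟨h₁, h₂⟩ => ⟨h₁.trans (by linarith), h₂.trans (by linarith)⟩

lemma isCompact_Sq (c : ℂ) (l : ℝ) : IsCompact (Sq c l) := by
  rw [Sq_eq_preimage]
  exact Complex.equivRealProdCLM.toHomeomorph.isCompact_preimage.2
    (isCompact_Icc.prod isCompact_Icc)

lemma measurableSet_Sq (c : ℂ) (l : ℝ) : MeasurableSet (Sq c l) :=
  (isCompact_Sq c l).isClosed.measurableSet

lemma volume_real_Sq (c : ℂ) {l : ℝ} (hl : 0 ≤ l) : volume.real (Sq c l) = l ^ 2 := by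
  rw [measureReal_def, Sq_eq_preimage, Complex.volume_preserving_equiv_real_prod.measure_preimage
    (measurableSet_Icc.prod measurableSet_Icc).nullMeasurableSet, Measure.volume_eq_prod,
    Measure.prod_prod, Real.volume_Icc, Real.volume_Icc, ENNReal.toReal_mul,
    ENNReal.toReal_ofReal (by linarith), ENNReal.toReal_ofReal (by linarith)]
  ring

lemma le_norm_sub_of_notMem_Sq {c z : ℂ} {l : ℝ} (h : z ∉ Sq c l) : l / 2 ≤ ‖z - c‖ := by
  simp only [Sq, mem_ofPred_eq, not_and_or, not_le] at h
  rcases h with h | h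
  · simpa using h.le.trans (Complex.abs_re_le_norm (z - c))
  · simpa using h.le.trans (Complex.abs_im_le_norm (z - c))

lemma monotone_Sq_two_pow_mul (c : ℂ) {l : ℝ} (hl : 0 ≤ l) :
    Monotone fun n : ℕ => Sq c (2 ^ n * l) := fun _ _ hmn =>
  Sq_mono c (mul_le_mul_of_nonneg_right (pow_le_pow_right₀ one_le_two hmn) hl)

lemma iUnion_Sq_two_pow_mul (c : ℂ) {l : ℝ} (hl : 0 < l) :
    ⋃ n : ℕ, Sq c (2 ^ n * l) = univ := by
  refine eq_univ_of_forall fun z => mem_iUnion.2 ?_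
  obtain ⟨n, hn⟩ := pow_unbounded_of_one_lt (2 * (|z.re - c.re| + |z.im - c.im|) / l)
    one_lt_two
  rw [div_lt_iff₀ hl] at hn
  exact ⟨n, by linarith [abs_nonneg (z.im - c.im)], by linarith [abs_nonneg (z.re - c.re)]⟩

lemma disjointed_Sq_two_pow_mul (c : ℂ) {l : ℝ} (hl : 0 ≤ l) (n : ℕ) :
    disjointed (fun k : ℕ => Sq c (2 ^ k * l)) (n + 1) =
      Sq c (2 ^ (n + 1) * l) \ Sq c (2 ^ n * l) :=
  (monotone_Sq_two_pow_mul c hl).disjointed_add_one n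

lemma compl_Sq_eq_iUnion_diff (c : ℂ) {l : ℝ} (hl : 0 < l) :
    (Sq c l)ᶜ = ⋃ n : ℕ, Sq c (2 ^ (n + 1) * l) \ Sq c (2 ^ n * l) := by
  ext z
  simp only [mem_compl_iff, mem_iUnion]
  constructor
  · intro hz
    obtain ⟨k, hk⟩ := mem_iUnion.1 ((iUnion_disjointed.trans
      (iUnion_Sq_two_pow_mul c hl)).symm ▸ mem_univ z)
    cases k with
    | zero => exact absurd (disjointed_subset _ 0 hk) (by simpa using hz)
    | succ n => exact ⟨n, disjointed_Sq_two_pow_mul c hl.le n ▸ hk⟩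
  · rintro ⟨n, -, hn⟩ hz
    exact hn (monotone_Sq_two_pow_mul c hl.le n.zero_le (by simpa using hz))

lemma pairwise_disjoint_Sq_diff (c : ℂ) {l : ℝ} (hl : 0 ≤ l) :
    Pairwise (Function.onFun Disjoint fun n : ℕ => Sq c (2 ^ (n + 1) * l) \ Sq c (2 ^ n * l)) := by
  simp_rw [← disjointed_Sq_two_pow_mul c hl]
  exact (disjoint_disjointed _).comp_of_injective (add_left_injective 1)

lemma integrableOn_iUnion_and_integral_le_tsum {α ι : Type*} [MeasurableSpace α] [Countable ι]
    {μ : Measure α} {f : α → ℝ} {s : ι → Set α} (hs : ∀ i, MeasurableSet (s i))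
    (hd : Pairwise (Function.onFun Disjoint s)) (hf : ∀ x, 0 ≤ f x)
    (hi : ∀ i, IntegrableOn f (s i) μ) {b : ι → ℝ} (hb : Summable b)
    (hle : ∀ i, ∫ x in s i, f x ∂μ ≤ b i) :
    IntegrableOn f (⋃ i, s i) μ ∧ ∫ x in ⋃ i, s i, f x ∂μ ≤ ∑' i, b i := by
  have hsum : Summable fun i => ∫ x in s i, f x ∂μ :=
    hb.of_nonneg_of_le (fun i => integral_nonneg hf) hle
  have hint : IntegrableOn f (⋃ i, s i) μ :=
    integrableOn_iUnion_of_summable_integral_norm hi (by simpa [Real.norm_of_nonneg (hf _)])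
  exact ⟨hint, (integral_iUnion hs hd hint).trans_le (hsum.tsum_le_tsum hle hb)⟩

lemma integrableOn_div_norm_sub_pow_and_integral_le {E : Type*} [NormedAddCommGroup E]
    [MeasurableSpace E] [OpensMeasurableSpace E] {μ : Measure E} {h : E → ℝ} {S : Set E}
    {c : E} {r : ℝ} (n : ℕ) (hr : 0 < r) (hS : MeasurableSet S) (hSr : ∀ u ∈ S, r ≤ ‖u - c‖)
    (hh : IntegrableOn h S μ) (hh0 : ∀ u ∈ S, 0 ≤ h u) :
    IntegrableOn (fun u => h u / ‖u - c‖ ^ n) S μ ∧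
      ∫ u in S, h u / ‖u - c‖ ^ n ∂μ ≤ (r ^ n)⁻¹ * ∫ u in S, h u ∂μ := by
  have hbound : ∀ u ∈ S, h u / ‖u - c‖ ^ n ≤ (r ^ n)⁻¹ * h u := fun u hu => by
    rw [← div_eq_inv_mul]
    exact div_le_div_of_nonneg_left (hh0 u hu) (by positivity) (by gcongr; exact hSr u hu)
  have hmeas : AEStronglyMeasurable (fun u => h u / ‖u - c‖ ^ n) (μ.restrict S) :=
    (hh.aemeasurable.div ((continuous_norm.comp (continuous_sub_right c)).measurable.pow_const
      n).aemeasurable).aestronglyMeasurable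
  have hint : IntegrableOn (fun u => h u / ‖u - c‖ ^ n) S μ :=
    (hh.const_mul (r ^ n)⁻¹).mono' hmeas <| ae_restrict_of_forall_mem hS fun u hu => by
      rw [Real.norm_of_nonneg (div_nonneg (hh0 u hu) (by positivity))]
      exact hbound u hu
  refine ⟨hint, ?_⟩
  rw [← integral_const_mul]
  exact setIntegral_mono_on hint (hh.const_mul _) hS hbound

lemma integrableOn_norm_sub_const_Sq {g : ℂ → ℂ} (hg : LocallyIntegrable g volume)
    (v c : ℂ) (l : ℝ) : IntegrableOn (fun z => ‖g z - v‖) (Sq c l) :=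
  ((hg.integrableOn_isCompact (isCompact_Sq c l)).sub
    (integrableOn_const (isCompact_Sq c l).measure_lt_top.ne)).norm

lemma norm_avgOn_Sq_sub_le {g : ℂ → ℂ} (hg : LocallyIntegrable g volume) (c : ℂ) {s t : ℝ}
    (hs : 0 < s) (hst : s ≤ t) (v : ℂ) :
    ‖avgOn g (Sq c s) - v‖ ≤ (s ^ 2)⁻¹ * ∫ z in Sq c t, ‖g z - v‖ := by
  have hmean : avgOn g (Sq c s) - v = (s ^ 2)⁻¹ • ∫ z in Sq c s, (g z - v) := by
    rw [integral_sub (hg.integrableOn_isCompact (isCompact_Sq c s))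
      (integrableOn_const (isCompact_Sq c s).measure_lt_top.ne), setIntegral_const,
      volume_real_Sq c hs.le, smul_sub, smul_smul, inv_mul_cancel₀ (by positivity), one_smul,
      avgOn, ← measureReal_def, volume_real_Sq c hs.le]
  calc ‖avgOn g (Sq c s) - v‖ ≤ (s ^ 2)⁻¹ * ∫ z in Sq c s, ‖g z - v‖ := by
        rw [hmean, norm_smul, Real.norm_of_nonneg (by positivity)]
        gcongr
        exact norm_integral_le_integral_norm _
    _ ≤ (s ^ 2)⁻¹ * ∫ z in Sq c t, ‖g z - v‖ := by
        gcongr 1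
        exact setIntegral_mono_set (integrableOn_norm_sub_const_Sq hg v c t)
          (Eventually.of_forall fun _ => norm_nonneg _) (Sq_mono c hst).eventuallyLE

lemma BMOBound.nonneg {ω : ℝ → ℝ} {g : ℂ → ℂ} {N l : ℝ} (h : BMOBound ω g N) (hl : 0 < l)
    (hω : 0 < ω l) : 0 ≤ N :=
  nonneg_of_mul_nonneg_left ((integral_nonneg fun _ => norm_nonneg _).trans (h 0 l hl))
    (by positivity)

lemma IsRegularModulus.exists_dyadic_growth {ω : ℝ → ℝ} (hreg : IsRegularModulus ω)
    (hpos : ∀ t : ℝ, 0 < t → 0 < ω t) :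
    ∃ a : ℝ, 1 < a ∧ a < 2 ∧ ∃ K : ℝ, 0 < K ∧
      ∀ l : ℝ, 0 < l → ∀ k : ℕ, ω (2 ^ k * l) ≤ K * ω l * a ^ k := by
  obtain ⟨-, ε, ⟨hε0, hε1⟩, C₀, -, hdec⟩ := hreg
  refine ⟨2 ^ ε, Real.one_lt_rpow one_lt_two hε0, ?_, max C₀ 1, by positivity, fun l hl k => ?_⟩
  · simpa using Real.rpow_lt_rpow_of_exponent_lt one_lt_two hε1
  have hωl := (hpos l hl).le
  rcases k.eq_zero_or_pos with rfl | hk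
  · simpa using le_mul_of_one_le_left hωl (le_max_right C₀ 1)
  have hdec := hdec _ _ hl (lt_mul_of_one_lt_left hl (one_lt_pow₀ one_lt_two hk.ne'))
  have hpow : ((2 : ℝ) ^ k) ^ ε = (2 ^ ε) ^ k := by
    rw [← Real.rpow_natCast, ← Real.rpow_mul zero_le_two, mul_comm, Real.rpow_mul zero_le_two,
      Real.rpow_natCast]
  rw [div_le_iff₀ (by positivity), Real.mul_rpow (by positivity) hl.le, hpow] at hdec
  calc ω (2 ^ k * l) ≤ C₀ * (ω l / l ^ ε) * ((2 ^ ε) ^ k * l ^ ε) := hdec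
    _ = C₀ * ω l * (2 ^ ε) ^ k := by field_simp
    _ ≤ max C₀ 1 * ω l * (2 ^ ε) ^ k := by gcongr; exact le_max_left C₀ 1

section Dyadic

variable {ω : ℝ → ℝ} {g : ℂ → ℂ} {N : ℝ} (hg : LocallyIntegrable g volume)
  (hBMO : BMOBound ω g N) (c : ℂ)
include hg hBMO

lemma norm_avgOn_Sq_sub_avgOn_Sq_two_mul_le {s : ℝ} (hs : 0 < s) :
    ‖avgOn g (Sq c s) - avgOn g (Sq c (2 * s))‖ ≤ 4 * N * ω (2 * s) :=
  calc ‖avgOn g (Sq c s) - avgOn g (Sq c (2 * s))‖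
      ≤ (s ^ 2)⁻¹ * ∫ z in Sq c (2 * s), ‖g z - avgOn g (Sq c (2 * s))‖ :=
        norm_avgOn_Sq_sub_le hg c hs (by linarith) _
    _ ≤ (s ^ 2)⁻¹ * (N * (ω (2 * s) * (2 * s) ^ 2)) := by
        gcongr; exact hBMO c _ (by positivity)
    _ = 4 * N * ω (2 * s) := by field_simp; ring

variable {l a M : ℝ} (hl : 0 < l) (ha : 1 < a) (hN : 0 ≤ N) (hM : 0 ≤ M)
  (hω : ∀ k : ℕ, ω (2 ^ k * l) ≤ M * a ^ k)
include hl ha hN hM hω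

lemma norm_avgOn_Sq_sub_avgOn_Sq_two_pow_mul_le (k : ℕ) :
    ‖avgOn g (Sq c l) - avgOn g (Sq c (2 ^ k * l))‖ ≤ 4 * N * M * a ^ (k + 1) / (a - 1) := by
  have hstep : ∀ j : ℕ, dist (avgOn g (Sq c (2 ^ j * l))) (avgOn g (Sq c (2 ^ (j + 1) * l))) ≤
      4 * N * M * a * a ^ j := fun j => by
    rw [dist_eq_norm, pow_succ', mul_assoc]
    refine (norm_avgOn_Sq_sub_avgOn_Sq_two_mul_le hg hBMO c (by positivity)).trans ?_
    rw [← mul_assoc, ← pow_succ']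
    calc 4 * N * ω (2 ^ (j + 1) * l) ≤ 4 * N * (M * a ^ (j + 1)) := by gcongr; exact hω _
      _ = 4 * N * M * a * a ^ j := by ring
  have hsum := dist_le_range_sum_of_dist_le k fun {j} _ => hstep j
  rw [← Finset.mul_sum, geom_sum_eq ha.ne', dist_eq_norm] at hsum
  simp only [pow_zero, one_mul] at hsum
  refine hsum.trans ?_
  rw [pow_succ', ← mul_assoc, mul_div_assoc]
  gcongr
  linarith

lemma integral_norm_sub_avgOn_Sq_two_pow_mul_le (k : ℕ) :
    ∫ z in Sq c (2 ^ k * l), ‖g z - avgOn g (Sq c l)‖ ≤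
      (2 ^ k * l) ^ 2 * (N * M * (1 + 4 * a / (a - 1)) * a ^ k) := by
  set s : ℝ := 2 ^ k * l
  set m := avgOn g (Sq c s)
  have hs : 0 < s := by positivity
  have hfin := (isCompact_Sq c s).measure_lt_top (μ := volume) |>.ne
  have hgm := integrableOn_norm_sub_const_Sq hg m c s
  have hm : ‖m - avgOn g (Sq c l)‖ ≤ 4 * N * M * a ^ (k + 1) / (a - 1) := by
    rw [norm_sub_rev]
    exact norm_avgOn_Sq_sub_avgOn_Sq_two_pow_mul_le hg hBMO c hl ha hN hM hω k
  calc ∫ z in Sq c s, ‖g z - avgOn g (Sq c l)‖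
      ≤ ∫ z in Sq c s, (‖g z - m‖ + ‖m - avgOn g (Sq c l)‖) :=
        setIntegral_mono_on (integrableOn_norm_sub_const_Sq hg _ c s)
          (hgm.add (integrableOn_const hfin)) (measurableSet_Sq c s)
          fun z _ => norm_sub_le_norm_sub_add_norm_sub _ _ _
    _ = (∫ z in Sq c s, ‖g z - m‖) + s ^ 2 * ‖m - avgOn g (Sq c l)‖ := by
        rw [integral_add hgm (integrableOn_const hfin), setIntegral_const,
          volume_real_Sq c hs.le, smul_eq_mul]
    _ ≤ N * (M * a ^ k * s ^ 2) + s ^ 2 * (4 * N * M * a ^ (k + 1) / (a - 1)) := by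
        gcongr
        exact (hBMO c s hs).trans (by gcongr; exact hω k)
    _ = s ^ 2 * (N * M * (1 + 4 * a / (a - 1)) * a ^ k) := by
        field_simp
        ring

lemma integrableOn_and_integral_compl_Sq_le (ha' : a < 2) :
    IntegrableOn (fun u => ‖g u - avgOn g (Sq c l)‖ / ‖u - c‖ ^ 3) (Sq c (2 * l))ᶜ ∧
      l * ∫ u in (Sq c (2 * l))ᶜ, ‖g u - avgOn g (Sq c l)‖ / ‖u - c‖ ^ 3 ≤
        16 * (1 + 4 * a / (a - 1)) * a ^ 2 / (1 - a / 2) * N * M := by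
  set E : ℝ := 16 * (1 + 4 * a / (a - 1)) * a ^ 2 * N * M / l with hE
  have hannulus : ∀ n : ℕ,
      IntegrableOn (fun u => ‖g u - avgOn g (Sq c l)‖ / ‖u - c‖ ^ 3)
        (Sq c (2 ^ (n + 1) * (2 * l)) \ Sq c (2 ^ n * (2 * l))) ∧
      ∫ u in Sq c (2 ^ (n + 1) * (2 * l)) \ Sq c (2 ^ n * (2 * l)),
        ‖g u - avgOn g (Sq c l)‖ / ‖u - c‖ ^ 3 ≤ E * (a / 2) ^ n := by
    intro n
    have hsq : 2 ^ (n + 1) * (2 * l) = 2 ^ (n + 2) * l := by ring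
    rw [hsq]
    have hint := integrableOn_norm_sub_const_Sq hg (avgOn g (Sq c l)) c (2 ^ (n + 2) * l)
    obtain ⟨hi, hle⟩ := integrableOn_div_norm_sub_pow_and_integral_le
      (S := Sq c (2 ^ (n + 2) * l) \ Sq c (2 ^ n * (2 * l))) 3
      (by positivity : 0 < 2 ^ n * l) ((measurableSet_Sq c _).diff (measurableSet_Sq c _))
      (fun u hu => (le_norm_sub_of_notMem_Sq hu.2).trans_eq' (by ring))
      (hint.mono_set sdiff_subset) (fun u _ => norm_nonneg _)
    refine ⟨hi, hle.trans ?_⟩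
    calc ((2 ^ n * l) ^ 3)⁻¹ * ∫ u in Sq c (2 ^ (n + 2) * l) \ Sq c (2 ^ n * (2 * l)),
          ‖g u - avgOn g (Sq c l)‖
        ≤ ((2 ^ n * l) ^ 3)⁻¹ * ((2 ^ (n + 2) * l) ^ 2 *
            (N * M * (1 + 4 * a / (a - 1)) * a ^ (n + 2))) := by
          gcongr 1
          exact (setIntegral_mono_set hint (Eventually.of_forall fun _ => norm_nonneg _)
            sdiff_subset.eventuallyLE).trans
            (integral_norm_sub_avgOn_Sq_two_pow_mul_le hg hBMO c hl ha hN hM hω (n + 2))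
      _ = E * (a / 2) ^ n := by
          rw [hE, div_pow, pow_add, pow_add]
          field_simp
          ring
  have ha2 : 0 ≤ a / 2 := by linarith
  obtain ⟨hint, hle⟩ := integrableOn_iUnion_and_integral_le_tsum
    (fun n => (measurableSet_Sq c _).diff (measurableSet_Sq c _))
    (pairwise_disjoint_Sq_diff c (by positivity)) (fun u => by positivity)
    (fun n => (hannulus n).1) ((summable_geometric_of_lt_one ha2 (by linarith)).mul_left E)
    (fun n => (hannulus n).2)
  rw [← compl_Sq_eq_iUnion_diff c (by positivity)] at hint hle
  refine ⟨hint, ?_⟩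
  calc l * ∫ u in (Sq c (2 * l))ᶜ, ‖g u - avgOn g (Sq c l)‖ / ‖u - c‖ ^ 3
      ≤ l * ∑' n : ℕ, E * (a / 2) ^ n := by gcongr
    _ = 16 * (1 + 4 * a / (a - 1)) * a ^ 2 / (1 - a / 2) * N * M := by
        rw [tsum_mul_left, tsum_geometric_of_lt_one ha2 (by linarith), hE]
        field_simp

end Dyadic

/-- third-term estimate in Section `ss_tterm`. For a regular `ω`
and `g ∈ BMO_ω(ℂ) ∩ L^∞(ℂ)`, for every square `Q` of side `ℓ ≤ 1/4` centered at `z₀`,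
`ℓ ∫_{ℂ∖2Q} |g(u) − g_Q| / |u − z₀|³ dA(u) ≤ C (‖g‖_{BMO_ω} + ‖g‖_∞) ω(ℓ)`. -/
theorem statement11 (ω : ℝ → ℝ) (hmod : IsModulus ω) (hreg : IsRegularModulus ω) :
    ∃ C : ℝ, 0 < C ∧ ∀ (g : ℂ → ℂ) (N Msup : ℝ),
      LocallyIntegrable g volume →
      (∀ᵐ z : ℂ, ‖g z‖ ≤ Msup) →
      BMOBound ω g N →
      ∀ (c : ℂ) (l : ℝ), 0 < l → l ≤ 1 / 4 →
        IntegrableOn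
          (fun u => ‖g u - avgOn g (Sq c l)‖ / ‖u - c‖ ^ 3)
          (Sq c (2 * l))ᶜ volume ∧
        l * ∫ u in (Sq c (2 * l))ᶜ,
            ‖g u - avgOn g (Sq c l)‖ / ‖u - c‖ ^ 3 ≤
          C * (N + Msup) * ω l := by
  obtain ⟨a, ha1, ha2, K, hK, hgrowth⟩ := hreg.exists_dyadic_growth hmod.2.2.2
  set C := 16 * (1 + 4 * a / (a - 1)) * a ^ 2 / (1 - a / 2) * K
  have hC : 0 < C := by
    have : 0 < a - 1 := by linarith
    have : 0 < 1 - a / 2 := by linarith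
    positivity
  refine ⟨C, hC, fun g N Msup hg hMsup hBMO c l hl _ => ?_⟩
  have hωl := hmod.2.2.2 l hl
  have hN := hBMO.nonneg hl hωl
  have hMsup0 : 0 ≤ Msup := (norm_nonneg _).trans hMsup.exists.choose_spec
  obtain ⟨hint, hle⟩ := integrableOn_and_integral_compl_Sq_le hg hBMO c hl ha1 hN
    (by positivity : 0 ≤ K * ω l) (hgrowth l hl) ha2
  refine ⟨hint, hle.trans ?_⟩
  calc 16 * (1 + 4 * a / (a - 1)) * a ^ 2 / (1 - a / 2) * N * (K * ω l) = C * N * ω l := by ring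
    _ ≤ C * (N + Msup) * ω l := by gcongr; linarith
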